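/- (Main theorem, 2D.) Let D = {x ∈ ℝ² : x₂ > 0}. Let u : ℝ² × [0,∞) → ℝ² be C³ in space up to the boundary and C¹ in time up to the boundary, divergence-free, satisfying u(x₁,0,t) = 0 for all x₁ and t, and suppose the scalar vorticity ω = ∂u²/∂x₁ − ∂u¹/∂x₂ satisfies ∂ω/∂t + (u·∇)ω − νΔω − G = 0 in the closed half plane. Let θ(x₁,t) = ω(x₁,0,t) and ψ(x₁,t) = G(x₁,0,t). Then the boundary vorticity evolves according to ∂θ/∂t − 2ν ∂²θ/∂x₁² − ν (∂/∂𝛎)³ u¹ − ψ = 0 on ∂D = ℝ, where ∂/∂𝛎 = −∂/∂x₂, i.e. (∂/∂𝛎)³ u¹ = −(∂³u¹/∂x₂³)(x₁,0,t). -/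

import Mathlib

/-! At the wall `u = 0`, so the advection term drops out of the vorticity equation there.
No-slip also kills every tangential derivative of `u²` along the wall, whence
`∂₁²ω = -∂₁²∂₂u¹` at the wall. Incompressibility `∂₂u² = -∂₁u¹` holds on the closed half
plane, so it survives one-sided differentiation in directions pointing into it, tangential
or inward normal; with Schwarz's theorem this gives `∂₂²ω = ∂₂∂₁∂₂u² - ∂₂³u¹ = -∂₁²∂₂u¹ - ∂₂³u¹`
at the wall. Hence `νΔω = 2ν∂₁²θ - ν∂₂³u¹`, which is the claimed boundary equation. -/

/-- Partial derivative of a scalar field on `ℝⁿ` in the `i`-th coordinate direction. -/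
noncomputable def pd {n : ℕ} (i : Fin n) (f : (Fin n → ℝ) → ℝ) (x : Fin n → ℝ) : ℝ :=
  fderiv ℝ f x (Pi.single i 1)

/-- The scalar vorticity `ω = ∂u²/∂x₁ − ∂u¹/∂x₂` of a planar vector field. -/
noncomputable def vort2 (u : (Fin 2 → ℝ) → Fin 2 → ℝ) (x : Fin 2 → ℝ) : ℝ :=
  pd 0 (fun y => u y 1) x - pd 1 (fun y => u y 0) x

open Set

section PartialDerivatives

variable {n : ℕ}

lemma ContDiff.pd {k m : WithTop ℕ∞} {f : (Fin n → ℝ) → ℝ} (hf : ContDiff ℝ k f)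
    (hmk : m + 1 ≤ k) (i : Fin n) : ContDiff ℝ m (pd i f) :=
  (ContinuousLinearMap.apply ℝ ℝ (Pi.single i 1 : Fin n → ℝ)).contDiff.comp
    (hf.fderiv_right hmk)

lemma pd_sub {f g : (Fin n → ℝ) → ℝ} {x : Fin n → ℝ} (hf : DifferentiableAt ℝ f x)
    (hg : DifferentiableAt ℝ g x) (i : Fin n) :
    pd i (fun y => f y - g y) x = pd i f x - pd i g x := by
  simp only [pd, fderiv_fun_sub hf hg, sub_apply]

lemma pd_neg (f : (Fin n → ℝ) → ℝ) (i : Fin n) :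
    pd i (fun y => -f y) = fun x => -pd i f x := by
  funext x
  simp only [pd, fderiv_fun_neg, neg_apply]

lemma pd_comm {f : (Fin n → ℝ) → ℝ} (hf : ContDiff ℝ 2 f) (i j : Fin n) :
    pd i (pd j f) = pd j (pd i f) := by
  funext x
  have hdf : Differentiable ℝ (fderiv ℝ f) :=
    (hf.fderiv_right (m := 1) (by norm_num)).differentiable (by norm_num)
  have hpd : ∀ w z : Fin n → ℝ,
      fderiv ℝ (fun y => fderiv ℝ f y w) x z = fderiv ℝ (fderiv ℝ f) x z w := by
    intro w z
    simp [fderiv_clm_apply (hdf x) (differentiableAt_const w)]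
  change fderiv ℝ (fun y => fderiv ℝ f y (Pi.single j 1)) x (Pi.single i 1)
      = fderiv ℝ (fun y => fderiv ℝ f y (Pi.single i 1)) x (Pi.single j 1)
  rw [hpd, hpd]
  exact second_derivative_symmetric (fun y => (hf.differentiable (by norm_num) y).hasFDerivAt)
    (hdf x).hasFDerivAt _ _

lemma fderiv_apply_eq_of_eq_on_ray {E F : Type*} [NormedAddCommGroup E] [NormedSpace ℝ E]
    [NormedAddCommGroup F] [NormedSpace ℝ F] {f g : E → F} {p v : E}
    (hf : DifferentiableAt ℝ f p) (hg : DifferentiableAt ℝ g p)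
    (hfg : ∀ s : ℝ, 0 ≤ s → f (p + s • v) = g (p + s • v)) :
    fderiv ℝ f p v = fderiv ℝ g p v := by
  have hray : HasDerivAt (fun s : ℝ => p + s • v) v 0 := by
    simpa using ((hasDerivAt_id (0 : ℝ)).smul_const v).const_add p
  have hf' := hf.hasFDerivAt.comp_hasDerivAt_of_eq 0 hray (by simp)
  have hg' := hg.hasFDerivAt.comp_hasDerivAt_of_eq 0 hray (by simp)
  exact (uniqueDiffOn_Ici 0 0 self_mem_Ici).eq_deriv _ hf'.hasDerivWithinAt
    (hg'.hasDerivWithinAt.congr (fun s hs => hfg s hs) (hfg 0 le_rfl))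

lemma Set.EqOn.pd_of_halfSpace {f g : (Fin n → ℝ) → ℝ} {j : Fin n} (hf : Differentiable ℝ f)
    (hg : Differentiable ℝ g) (hfg : EqOn f g {x | 0 ≤ x j}) (i : Fin n) :
    EqOn (pd i f) (pd i g) {x | 0 ≤ x j} := by
  intro p hp
  refine fderiv_apply_eq_of_eq_on_ray (hf p) (hg p) fun s hs => hfg ?_
  have hei : (0 : ℝ) ≤ (Pi.single i 1 : Fin n → ℝ) j := by
    by_cases h : j = i <;> simp [h]
  simpa using add_nonneg hp (mul_nonneg hs hei)

end PartialDerivatives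

section BoundaryLine

lemma pd_zero_eq_deriv_boundary {f : (Fin 2 → ℝ) → ℝ} {a : ℝ}
    (hf : DifferentiableAt ℝ f ![a, 0]) : pd 0 f ![a, 0] = deriv (fun c => f ![c, 0]) a := by
  have hline : HasDerivAt (fun c : ℝ => (![c, 0] : Fin 2 → ℝ)) (Pi.single 0 1) a := by
    rw [hasDerivAt_pi]
    intro i
    fin_cases i
    · simpa using hasDerivAt_id' a
    · simpa using hasDerivAt_const a (0 : ℝ)
  exact (hf.hasFDerivAt.comp_hasDerivAt a hline).deriv.symm

lemma pd_zero_eq_zero_of_boundary {f : (Fin 2 → ℝ) → ℝ} (hf : Differentiable ℝ f)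
    (h : ∀ b, f ![b, 0] = 0) (a : ℝ) : pd 0 f ![a, 0] = 0 := by
  simp [pd_zero_eq_deriv_boundary (hf _), h]

lemma deriv_deriv_boundary_eq_pd_pd {f : (Fin 2 → ℝ) → ℝ} (hf : ContDiff ℝ 2 f) (a : ℝ) :
    deriv (fun b => deriv (fun c => f ![c, 0]) b) a = pd 0 (pd 0 f) ![a, 0] := by
  have hinner : (fun b => deriv (fun c => f ![c, 0]) b) = fun b => pd 0 f ![b, 0] :=
    funext fun b => (pd_zero_eq_deriv_boundary (hf.differentiable (by norm_num) _)).symm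
  rw [hinner, pd_zero_eq_deriv_boundary ((hf.pd (m := 1) (by norm_num) 0).differentiable
    (by norm_num) _)]

end BoundaryLine

section Vorticity

variable {v : (Fin 2 → ℝ) → Fin 2 → ℝ}

lemma pd_vort2 (hv : ContDiff ℝ 2 v) (i : Fin 2) :
    pd i (vort2 v) = fun x => pd i (pd 0 fun y => v y 1) x - pd i (pd 1 fun y => v y 0) x :=
  funext fun x => pd_sub
    (((contDiff_pi.1 hv 1).pd (m := 1) (by norm_num) 0).differentiable (by norm_num) x)
    (((contDiff_pi.1 hv 0).pd (m := 1) (by norm_num) 1).differentiable (by norm_num) x) i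

lemma ContDiff.vort2 {m : WithTop ℕ∞} (hv : ContDiff ℝ (m + 1) v) : ContDiff ℝ m (vort2 v) :=
  ((contDiff_pi.1 hv 1).pd le_rfl 0).sub ((contDiff_pi.1 hv 0).pd le_rfl 1)

lemma pd_zero_pd_zero_vort2_boundary (hv : ContDiff ℝ 3 v) (hslip : ∀ b, v ![b, 0] 1 = 0)
    (a : ℝ) : pd 0 (pd 0 (vort2 v)) ![a, 0] = -pd 0 (pd 0 (pd 1 fun y => v y 0)) ![a, 0] := by
  set U0 : (Fin 2 → ℝ) → ℝ := fun y => v y 0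
  set U1 : (Fin 2 → ℝ) → ℝ := fun y => v y 1
  have hU0 : ContDiff ℝ 3 U0 := contDiff_pi.1 hv 0
  have hU1 : ContDiff ℝ 3 U1 := contDiff_pi.1 hv 1
  have hU1' : ContDiff ℝ 2 (pd 0 U1) := hU1.pd (by norm_num) 0
  have hU1'' : ContDiff ℝ 1 (pd 0 (pd 0 U1)) := hU1'.pd (by norm_num) 0
  have hU0' : ContDiff ℝ 2 (pd 1 U0) := hU0.pd (by norm_num) 1
  have hU0'' : ContDiff ℝ 1 (pd 0 (pd 1 U0)) := hU0'.pd (by norm_num) 0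
  have htangential : pd 0 (pd 0 (pd 0 U1)) ![a, 0] = 0 :=
    pd_zero_eq_zero_of_boundary (hU1''.differentiable (by norm_num))
      (pd_zero_eq_zero_of_boundary (hU1'.differentiable (by norm_num))
        (pd_zero_eq_zero_of_boundary (hU1.differentiable (by norm_num)) hslip)) a
  rw [pd_vort2 (hv.of_le (by norm_num)), pd_sub (hU1''.differentiable (by norm_num) _)
    (hU0''.differentiable (by norm_num) _), htangential, zero_sub]

lemma pd_one_pd_one_vort2_boundary (hv : ContDiff ℝ 3 v)
    (hdiv : ∀ x : Fin 2 → ℝ, 0 ≤ x 1 → pd 0 (fun y => v y 0) x + pd 1 (fun y => v y 1) x = 0)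
    (a : ℝ) : pd 1 (pd 1 (vort2 v)) ![a, 0]
      = -pd 0 (pd 0 (pd 1 fun y => v y 0)) ![a, 0]
        - pd 1 (pd 1 (pd 1 fun y => v y 0)) ![a, 0] := by
  set U0 : (Fin 2 → ℝ) → ℝ := fun y => v y 0
  set U1 : (Fin 2 → ℝ) → ℝ := fun y => v y 1
  have hU0 : ContDiff ℝ 3 U0 := contDiff_pi.1 hv 0
  have hU1 : ContDiff ℝ 3 U1 := contDiff_pi.1 hv 1
  have hU0' : ContDiff ℝ 2 (pd 0 U0) := hU0.pd (by norm_num) 0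
  have hU0'' : ContDiff ℝ 1 (pd 0 (pd 0 U0)) := hU0'.pd (by norm_num) 0
  have hU1' : ContDiff ℝ 2 (pd 1 U1) := hU1.pd (by norm_num) 1
  have hU1'' : ContDiff ℝ 1 (pd 0 (pd 1 U1)) := hU1'.pd (by norm_num) 0
  have hincompr : EqOn (pd 1 U1) (fun x => -pd 0 U0 x) {x | 0 ≤ x 1} :=
    fun x hx => eq_neg_of_add_eq_zero_right (hdiv x hx)
  have hincompr₁ : EqOn (pd 0 (pd 1 U1)) (fun x => -pd 0 (pd 0 U0) x) {x | 0 ≤ x 1} := by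
    rw [← pd_neg]
    exact hincompr.pd_of_halfSpace (hU1'.differentiable (by norm_num))
      (hU0'.differentiable (by norm_num)).neg 0
  have hincompr₂ : pd 1 (pd 0 (pd 1 U1)) ![a, 0] = -pd 1 (pd 0 (pd 0 U0)) ![a, 0] := by
    rw [← congrFun (pd_neg _ 1)]
    exact hincompr₁.pd_of_halfSpace (hU1''.differentiable (by norm_num))
      (hU0''.differentiable (by norm_num)).neg 1 (by simp)
  have hdiff₁ : Differentiable ℝ (pd 1 (pd 0 U1)) :=
    ((hU1.pd (m := 2) (by norm_num) 0).pd (m := 1) (by norm_num) 1).differentiable one_ne_zero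
  have hdiff₂ : Differentiable ℝ (pd 1 (pd 1 U0)) :=
    ((hU0.pd (m := 2) (by norm_num) 1).pd (m := 1) (by norm_num) 1).differentiable one_ne_zero
  rw [pd_vort2 (hv.of_le (by norm_num)), pd_sub (hdiff₁ _) (hdiff₂ _),
    pd_comm (hU1.of_le (by norm_num)) 1 0, hincompr₂, pd_comm hU0' 1 0,
    pd_comm (hU0.of_le (by norm_num)) 1 0]

end Vorticity

theorem boundary_vorticity_dynamics_2d_general
    (ν : ℝ)
    (u : (Fin 2 → ℝ) → ℝ → Fin 2 → ℝ)
    (G : (Fin 2 → ℝ) → ℝ → ℝ)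
    (hu_space : ∀ t : ℝ, 0 ≤ t → ContDiff ℝ 3 (fun x => u x t))
    (hdiv : ∀ x : Fin 2 → ℝ, 0 ≤ x 1 → ∀ t : ℝ, 0 ≤ t →
      pd 0 (fun y => u y t 0) x + pd 1 (fun y => u y t 1) x = 0)
    (hnoslip : ∀ a : ℝ, ∀ t : ℝ, 0 ≤ t → u ![a, 0] t = 0)
    (htransport : ∀ x : Fin 2 → ℝ, 0 ≤ x 1 → ∀ t : ℝ, 0 ≤ t →
      deriv (fun s => vort2 (fun z => u z s) x) t
        + ∑ i : Fin 2, u x t i * pd i (fun y => vort2 (fun z => u z t) y) x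
        - ν * ∑ i : Fin 2, pd i (pd i (fun y => vort2 (fun z => u z t) y)) x
        - G x t = 0) :
    ∀ a : ℝ, ∀ t : ℝ, 0 ≤ t →
      deriv (fun s => vort2 (fun z => u z s) ![a, 0]) t
        - 2 * ν * deriv (fun b => deriv (fun c => vort2 (fun z => u z t) ![c, 0]) b) a
        - ν * (-(pd 1 (pd 1 (pd 1 (fun y => u y t 0))) ![a, 0]))
        - G ![a, 0] t = 0 := by
  intro a t ht
  have hv : ContDiff ℝ 3 fun z => u z t := hu_space t ht
  have hslip : ∀ b, u ![b, 0] t 1 = 0 := fun b => congrFun (hnoslip b t ht) 1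
  have hadvection : ∑ i : Fin 2, u ![a, 0] t i * pd i (vort2 fun z => u z t) ![a, 0] = 0 := by
    simp [hnoslip a t ht]
  have htransport_boundary := htransport ![a, 0] (by simp) t ht
  rw [hadvection, Fin.sum_univ_two,
    pd_one_pd_one_vort2_boundary hv (fun x hx => hdiv x hx t ht),
    pd_zero_pd_zero_vort2_boundary hv hslip] at htransport_boundary
  rw [deriv_deriv_boundary_eq_pd_pd (hv.vort2 (m := 2)), pd_zero_pd_zero_vort2_boundary hv hslip]
  linarith

/-- main theorem, 2D: for a divergence-free planar velocity field `u` on the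
upper half plane, `C³` in space and `C¹` in time up to the boundary, vanishing at the
boundary `{x₂ = 0}`, and whose scalar vorticity `ω = ∂u²/∂x₁ − ∂u¹/∂x₂` satisfies
`∂ω/∂t + (u·∇)ω − νΔω − G = 0` in the closed half plane, the boundary vorticity
`θ(x₁,t) = ω(x₁,0,t)` evolves by `∂θ/∂t − 2ν ∂²θ/∂x₁² − ν(∂/∂𝛎)³u¹ − ψ = 0`,
where `∂/∂𝛎 = −∂/∂x₂` (so `(∂/∂𝛎)³u¹ = −∂³u¹/∂x₂³` at the boundary) and
`ψ(x₁,t) = G(x₁,0,t)`. -/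
theorem boundary_vorticity_dynamics_2d
    (ν : ℝ) (hν : 0 < ν)
    (u : (Fin 2 → ℝ) → ℝ → Fin 2 → ℝ)
    (G : (Fin 2 → ℝ) → ℝ → ℝ)
    (hu_space : ∀ t : ℝ, 0 ≤ t → ContDiff ℝ 3 (fun x => u x t))
    (hu_time : ∀ x : Fin 2 → ℝ, ContDiff ℝ 1 (fun t => vort2 (fun z => u z t) x))
    (hdiv : ∀ x : Fin 2 → ℝ, 0 ≤ x 1 → ∀ t : ℝ, 0 ≤ t →
      pd 0 (fun y => u y t 0) x + pd 1 (fun y => u y t 1) x = 0)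
    (hnoslip : ∀ a : ℝ, ∀ t : ℝ, 0 ≤ t → u ![a, 0] t = 0)
    (htransport : ∀ x : Fin 2 → ℝ, 0 ≤ x 1 → ∀ t : ℝ, 0 ≤ t →
      deriv (fun s => vort2 (fun z => u z s) x) t
        + ∑ i : Fin 2, u x t i * pd i (fun y => vort2 (fun z => u z t) y) x
        - ν * ∑ i : Fin 2, pd i (pd i (fun y => vort2 (fun z => u z t) y)) x
        - G x t = 0) :
    ∀ a : ℝ, ∀ t : ℝ, 0 ≤ t →
      deriv (fun s => vort2 (fun z => u z s) ![a, 0]) t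
        - 2 * ν * deriv (fun b => deriv (fun c => vort2 (fun z => u z t) ![c, 0]) b) a
        - ν * (-(pd 1 (pd 1 (pd 1 (fun y => u y t 0))) ![a, 0]))
        - G ![a, 0] t = 0 :=
  boundary_vorticity_dynamics_2d_general ν u G hu_space hdiv hnoslip htransport
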